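/- Suppose φ : ℝ^d → ℝ is bounded above on the box Π_{i=1}^d [a_{i,0}, a_{i,n}] and the function z ↦ φ(F(z)) on Δ is concave-extendable from vert(Δ), the set of vertices of Δ (namely, all z with each z_i of the form (1,…,1,0,…,0) with leading entry 1). Then the continuous relaxation R := { (f, μ, z, δ) : μ ≤ conc_Δ(φ∘F)(z), f = F(z), (z,δ) satisfies (Inc-1), δ ∈ [0,1]^{Σ_i(l_i−1)} } is ideal: every extreme point (f, μ, z, δ) of R has δ ∈ {0,1}^{Σ_i (l_i−1)}. -/

import Mathlib

open Finset

noncomputable section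

/-- Coercion of a natural number `k ≤ n` into `Fin (n+1)`. -/
def toIdx (n k : ℕ) : Fin (n + 1) := ⟨min k n, Nat.lt_succ_of_le (Nat.min_le_right k n)⟩

/-- Membership in `Δ = Δ_1 × ⋯ × Δ_d`: each row satisfies `1 = z_0 ≥ z_1 ≥ … ≥ z_n ≥ 0`. -/
def memDelta (d n : ℕ) (z : Fin d → Fin (n + 1) → ℝ) : Prop :=
  ∀ i, z i 0 = 1 ∧ Antitone (z i) ∧ 0 ≤ z i (Fin.last n)

/-- The vertices of `Δ`: each row is of the form `(1,…,1,0,…,0)` with leading entry `1`. -/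
def vertDelta (d n : ℕ) : Set (Fin d → Fin (n + 1) → ℝ) :=
  {z | ∀ i, ∃ k : ℕ, 1 ≤ k ∧ k ≤ n + 1 ∧
    ∀ j : Fin (n + 1), z i j = if (j : ℕ) < k then 1 else 0}

/-- The constraint system (Inc-1). -/
def Inc1 (d n : ℕ) (l : Fin d → ℕ) (τ : Fin d → ℕ → ℕ)
    (z : Fin d → Fin (n + 1) → ℝ) (δ : ∀ i : Fin d, Fin (l i - 1) → ℝ) : Prop :=
  memDelta d n z ∧
    ∀ (i : Fin d) (t : Fin (l i - 1)),
      δ i t ≤ z i (toIdx n (τ i ((t : ℕ) + 1))) ∧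
        z i (toIdx n (τ i ((t : ℕ) + 1) + 1)) ≤ δ i t

/-- `F_i(z_i) = a_{i,0} z_{i,0} + Σ_{j=1}^n (a_{i,j} − a_{i,j−1}) z_{i,j}`. -/
def Fmap (d n : ℕ) (a : Fin d → Fin (n + 1) → ℝ) (z : Fin d → Fin (n + 1) → ℝ) :
    Fin d → ℝ :=
  fun i => a i 0 * z i 0 + ∑ j : Fin n, (a i j.succ - a i j.castSucc) * z i j.succ

/-- The concave envelope of `g` over `S`, evaluated at `x`. -/
def concEnv {E : Type*} [AddCommMonoid E] [Module ℝ E] (S : Set E) (g : E → ℝ) (x : E) : ℝ :=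
  sSup {r : ℝ | ∃ (k : ℕ) (lam : Fin k → ℝ) (y : Fin k → E),
    (∀ idx, 0 ≤ lam idx) ∧ ∑ idx, lam idx = 1 ∧ (∀ idx, y idx ∈ S) ∧
    ∑ idx, lam idx • y idx = x ∧ r = ∑ idx, lam idx * g (y idx)}


/-- The vertex of `Δ` with jumps after positions `c i`. -/
def vtx (d n : ℕ) (c : Fin d → Fin (n + 1)) : Fin d → Fin (n + 1) → ℝ :=
  fun i j => if (j : ℕ) ≤ (c i : ℕ) then 1 else 0

lemma vtx_nonneg (d n : ℕ) (c : Fin d → Fin (n + 1)) (i : Fin d) (j : Fin (n + 1)) :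
    0 ≤ vtx d n c i j := by
  unfold vtx; split_ifs <;> norm_num

lemma vtx_le_one (d n : ℕ) (c : Fin d → Fin (n + 1)) (i : Fin d) (j : Fin (n + 1)) :
    vtx d n c i j ≤ 1 := by
  unfold vtx; split_ifs <;> norm_num

lemma vtx_memDelta (d n : ℕ) (c : Fin d → Fin (n + 1)) : memDelta d n (vtx d n c) := by
  intro i
  refine ⟨by simp [vtx], ?_, vtx_nonneg d n c i _⟩
  intro j j' h
  unfold vtx
  split_ifs with h1 h2 h2
  · exact le_refl _
  · exact absurd (le_trans (show (j:ℕ) ≤ (j':ℕ) from h) h1) h2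
  · norm_num
  · norm_num

lemma vtx_mem_vert (d n : ℕ) (c : Fin d → Fin (n + 1)) : vtx d n c ∈ vertDelta d n := by
  intro i
  refine ⟨(c i : ℕ) + 1, le_add_self, Nat.succ_le_succ (Nat.le_of_lt_succ (c i).isLt), ?_⟩
  intro j
  unfold vtx
  simp [Nat.lt_succ_iff]

lemma vert_eq_vtx (d n : ℕ) {z} (hz : z ∈ vertDelta d n) : ∃ c, z = vtx d n c := by
  choose k hk1 hk2 hkz using hz
  refine ⟨fun i => ⟨k i - 1, by have := hk2 i; omega⟩, ?_⟩
  funext i j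
  rw [hkz i j]
  unfold vtx
  have h1 := hk1 i
  have : ((j:ℕ) < k i) ↔ ((j:ℕ) ≤ k i - 1) := by omega
  simp [this]

/-- The representation set underlying `concEnv`. -/
def envSet {E : Type*} [AddCommMonoid E] [Module ℝ E] (S : Set E) (g : E → ℝ) (x : E) :
    Set ℝ :=
  {r : ℝ | ∃ (k : ℕ) (lam : Fin k → ℝ) (y : Fin k → E),
    (∀ idx, 0 ≤ lam idx) ∧ ∑ idx, lam idx = 1 ∧ (∀ idx, y idx ∈ S) ∧
    ∑ idx, lam idx • y idx = x ∧ r = ∑ idx, lam idx * g (y idx)}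

lemma concEnv_eq_sSup {E : Type*} [AddCommMonoid E] [Module ℝ E] (S : Set E) (g : E → ℝ)
    (x : E) : concEnv S g x = sSup (envSet S g x) := rfl

lemma envSet_bddAbove {E : Type*} [AddCommMonoid E] [Module ℝ E] {S : Set E} {g : E → ℝ}
    {x : E} {C : ℝ} (hC : ∀ y ∈ S, g y ≤ C) : BddAbove (envSet S g x) := by
  refine ⟨C, ?_⟩
  rintro r ⟨k, lam, y, hlam, hsum, hy, -, rfl⟩
  calc ∑ idx, lam idx * g (y idx) ≤ ∑ idx, lam idx * C := by
        refine Finset.sum_le_sum fun idx _ => ?_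
        exact mul_le_mul_of_nonneg_left (hC _ (hy idx)) (hlam idx)
    _ = C := by rw [← Finset.sum_mul, hsum, one_mul]

lemma le_concEnv {E : Type*} [AddCommMonoid E] [Module ℝ E] {S : Set E} {g : E → ℝ}
    {x : E} {C : ℝ} (hC : ∀ y ∈ S, g y ≤ C) {r : ℝ} (hr : r ∈ envSet S g x) :
    r ≤ concEnv S g x :=
  le_csSup (envSet_bddAbove hC) hr

lemma self_mem_envSet {E : Type*} [AddCommMonoid E] [Module ℝ E] {S : Set E} (g : E → ℝ)
    {x : E} (hx : x ∈ S) : g x ∈ envSet S g x := by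
  refine ⟨1, fun _ => 1, fun _ => x, fun _ => zero_le_one, by simp, fun _ => hx, by simp, by simp⟩

lemma memDelta_nonneg {d n : ℕ} {z} (hz : memDelta d n z) (i : Fin d) (j : Fin (n + 1)) :
    0 ≤ z i j :=
  le_trans (hz i).2.2 ((hz i).2.1 (Fin.le_last j))

lemma memDelta_le_one {d n : ℕ} {z} (hz : memDelta d n z) (i : Fin d) (j : Fin (n + 1)) :
    z i j ≤ 1 := by
  rw [← (hz i).1]
  exact (hz i).2.1 (Fin.zero_le j)

lemma toIdx_val {n k : ℕ} (h : k ≤ n) : ((toIdx n k : Fin (n + 1)) : ℕ) = k := by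
  simp [toIdx, min_eq_left h]

lemma telescope_sum (n : ℕ) (f : Fin (n + 1) → ℝ) :
    ∑ j : Fin n, (f j.succ - f j.castSucc) = f (Fin.last n) - f 0 := by
  have key : ∀ j : Fin n, f j.succ - f j.castSucc =
      (fun k : ℕ => f (toIdx n k)) ((j : ℕ) + 1) - (fun k : ℕ => f (toIdx n k)) (j : ℕ) := by
    intro j
    have h1 : toIdx n ((j : ℕ) + 1) = j.succ := Fin.ext (by rw [toIdx_val (by omega)]; rfl)
    have h2 : toIdx n (j : ℕ) = j.castSucc := Fin.ext (by rw [toIdx_val (by omega)]; rfl)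
    simp [h1, h2]
  calc ∑ j : Fin n, (f j.succ - f j.castSucc)
      = ∑ j : Fin n, ((fun k : ℕ => f (toIdx n k)) ((j : ℕ) + 1)
          - (fun k : ℕ => f (toIdx n k)) (j : ℕ)) := Finset.sum_congr rfl fun j _ => key j
    _ = ∑ k ∈ Finset.range n, ((fun k : ℕ => f (toIdx n k)) (k + 1)
          - (fun k : ℕ => f (toIdx n k)) k) :=
        Fin.sum_univ_eq_sum_range (fun k => (fun k : ℕ => f (toIdx n k)) (k + 1)
          - (fun k : ℕ => f (toIdx n k)) k) n
    _ = f (toIdx n n) - f (toIdx n 0) := Finset.sum_range_sub (fun k => f (toIdx n k)) n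
    _ = f (Fin.last n) - f 0 := by
        congr 1
        · congr 1; exact Fin.ext (by rw [toIdx_val le_rfl]; rfl)

lemma Fmap_mem_Icc {d n : ℕ} {a : Fin d → Fin (n + 1) → ℝ} (ha : ∀ i, StrictMono (a i))
    {z} (hz : memDelta d n z) :
    Fmap d n a z ∈ Set.Icc (fun i => a i 0) (fun i => a i (Fin.last n)) := by
  constructor <;> intro i <;> unfold Fmap <;> rw [(hz i).1, mul_one]
  · have : (0:ℝ) ≤ ∑ j : Fin n, (a i j.succ - a i j.castSucc) * z i j.succ := by
      refine Finset.sum_nonneg fun j _ => mul_nonneg ?_ (memDelta_nonneg hz i _)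
      exact sub_nonneg.2 (le_of_lt (ha i (Fin.castSucc_lt_succ (i := j))))
    linarith
  · have : ∑ j : Fin n, (a i j.succ - a i j.castSucc) * z i j.succ
        ≤ ∑ j : Fin n, (a i j.succ - a i j.castSucc) := by
      refine Finset.sum_le_sum fun j _ => ?_
      have h1 : (0:ℝ) ≤ a i j.succ - a i j.castSucc :=
        sub_nonneg.2 (le_of_lt (ha i (Fin.castSucc_lt_succ (i := j))))
      nlinarith [memDelta_le_one hz i j.succ, memDelta_nonneg hz i j.succ]
    have h2 := telescope_sum n (a i)
    linarith

lemma Fmap_sum {ι : Type*} [Fintype ι] (d n : ℕ) (a : Fin d → Fin (n + 1) → ℝ) (m : ι → ℝ)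
    (y : ι → (Fin d → Fin (n + 1) → ℝ)) :
    Fmap d n a (∑ b, m b • y b) = ∑ b, m b • Fmap d n a (y b) := by
  funext i
  have happ : ∀ j, (∑ b, m b • y b) i j = ∑ b, m b * y b i j := by
    intro j; simp [Finset.sum_apply, Pi.smul_apply, smul_eq_mul]
  have happ2 : (∑ b, m b • Fmap d n a (y b)) i = ∑ b, m b * Fmap d n a (y b) i := by
    simp [Finset.sum_apply, Pi.smul_apply, smul_eq_mul]
  rw [happ2]
  unfold Fmap
  simp only [happ, mul_add, Finset.mul_sum, Finset.sum_add_distrib]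
  congr 1
  · exact Finset.sum_congr rfl fun b _ => by ring
  · rw [Finset.sum_comm]
    exact Finset.sum_congr rfl fun b _ => Finset.sum_congr rfl fun j _ => by ring

/-- Auxiliary: extension of a row to `ℕ`, vanishing beyond `n`. -/
def fN (n : ℕ) (zi : Fin (n + 1) → ℝ) (k : ℕ) : ℝ := if k ≤ n then zi (toIdx n k) else 0

/-- The staircase weights of a row. -/
def wtN (n : ℕ) (zi : Fin (n + 1) → ℝ) (k : ℕ) : ℝ := fN n zi k - fN n zi (k + 1)

lemma wtN_nonneg {d n : ℕ} {z} (hz : memDelta d n z) (i : Fin d) (k : ℕ) :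
    0 ≤ wtN n (z i) k := by
  unfold wtN fN
  split_ifs with h1 h2 h2
  · refine sub_nonneg.2 ((hz i).2.1 ?_)
    show ((toIdx n k : Fin (n+1)) : ℕ) ≤ ((toIdx n (k+1) : Fin (n+1)) : ℕ)
    rw [toIdx_val h1, toIdx_val h2]; omega
  · rw [sub_zero]
    have : toIdx n k = Fin.last n := Fin.ext (by rw [toIdx_val h1]; simp; omega)
    rw [this]; exact (hz i).2.2
  · omega
  · simp

lemma wtN_sum_one {d n : ℕ} {z} (hz : memDelta d n z) (i : Fin d) :
    ∑ k ∈ Finset.range (n + 1), wtN n (z i) k = 1 := by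
  unfold wtN
  rw [Finset.sum_range_sub' (fN n (z i)) (n + 1)]
  have h0 : fN n (z i) 0 = 1 := by
    unfold fN
    rw [if_pos (Nat.zero_le n)]
    have : toIdx n 0 = 0 := Fin.ext (by rw [toIdx_val (Nat.zero_le n)]; rfl)
    rw [this, (hz i).1]
  have h1 : fN n (z i) (n + 1) = 0 := by unfold fN; rw [if_neg (by omega)]
  rw [h0, h1, sub_zero]

lemma wtN_tail_sum {d n : ℕ} {z} (hz : memDelta d n z) (i : Fin d) (j : ℕ) (hj : j ≤ n) :
    ∑ k ∈ Finset.range (n + 1), wtN n (z i) k * (if j ≤ k then 1 else 0)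
      = z i (toIdx n j) := by
  have hfilter : (Finset.range (n + 1)).filter (fun k => j ≤ k) = Finset.Ico j (n + 1) := by
    ext k; simp [Finset.mem_filter, Finset.mem_range, Finset.mem_Ico]; omega
  calc ∑ k ∈ Finset.range (n + 1), wtN n (z i) k * (if j ≤ k then 1 else 0)
      = ∑ k ∈ Finset.range (n + 1), (if j ≤ k then wtN n (z i) k else 0) := by
        refine Finset.sum_congr rfl fun k _ => ?_; split_ifs <;> simp
    _ = ∑ k ∈ (Finset.range (n + 1)).filter (fun k => j ≤ k), wtN n (z i) k :=
        (Finset.sum_filter _ _).symm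
    _ = ∑ k ∈ Finset.Ico j (n + 1), wtN n (z i) k := by rw [hfilter]
    _ = ∑ k ∈ Finset.range (n + 1 - j), wtN n (z i) (j + k) := by
        rw [Finset.sum_Ico_eq_sum_range]
    _ = ∑ k ∈ Finset.range (n + 1 - j),
          ((fun k => fN n (z i) (j + k)) k - (fun k => fN n (z i) (j + k)) (k + 1)) := by
        refine Finset.sum_congr rfl fun k _ => ?_
        unfold wtN
        have : j + (k + 1) = (j + k) + 1 := by omega
        simp [this]
    _ = fN n (z i) (j + 0) - fN n (z i) (j + (n + 1 - j)) :=
        Finset.sum_range_sub' (fun k => fN n (z i) (j + k)) (n + 1 - j)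
    _ = z i (toIdx n j) := by
        have e1 : j + 0 = j := by omega
        have e2 : j + (n + 1 - j) = n + 1 := by omega
        rw [e1, e2]
        unfold fN
        rw [if_pos hj, if_neg (by omega), sub_zero]

/-- Product staircase weights on the vertex set. -/
def stairWt (d n : ℕ) (z : Fin d → Fin (n + 1) → ℝ) (c : Fin d → Fin (n + 1)) : ℝ :=
  ∏ i, wtN n (z i) (c i : ℕ)

lemma stairWt_nonneg {d n : ℕ} {z} (hz : memDelta d n z) (c : Fin d → Fin (n + 1)) :
    0 ≤ stairWt d n z c :=
  Finset.prod_nonneg fun i _ => wtN_nonneg hz i _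

lemma wtN_fin_sum {d n : ℕ} {z} (hz : memDelta d n z) (i : Fin d) :
    ∑ x : Fin (n + 1), wtN n (z i) (x : ℕ) = 1 := by
  rw [Fin.sum_univ_eq_sum_range (fun k => wtN n (z i) k) (n + 1)]
  exact wtN_sum_one hz i

lemma stairWt_sum_one {d n : ℕ} {z} (hz : memDelta d n z) :
    ∑ c : Fin d → Fin (n + 1), stairWt d n z c = 1 := by
  unfold stairWt
  rw [← Fintype.prod_sum (fun i (x : Fin (n + 1)) => wtN n (z i) (x : ℕ))]
  exact Finset.prod_eq_one fun i _ => wtN_fin_sum hz i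

lemma stairWt_combo {d n : ℕ} {z} (hz : memDelta d n z) (i : Fin d) (j : Fin (n + 1)) :
    ∑ c : Fin d → Fin (n + 1), stairWt d n z c * vtx d n c i j = z i j := by
  classical
  have hterm : ∀ c : Fin d → Fin (n + 1), stairWt d n z c * vtx d n c i j
      = ∏ i' : Fin d, (wtN n (z i') (c i' : ℕ) *
          (if i' = i then (if (j : ℕ) ≤ (c i' : ℕ) then 1 else 0) else 1)) := by
    intro c
    rw [Finset.prod_mul_distrib]
    unfold stairWt vtx
    congr 1
    rw [Finset.prod_ite_eq' Finset.univ i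
      (fun i' => if (j : ℕ) ≤ (c i' : ℕ) then (1:ℝ) else 0)]
    simp
  calc ∑ c : Fin d → Fin (n + 1), stairWt d n z c * vtx d n c i j
      = ∑ c : Fin d → Fin (n + 1), ∏ i' : Fin d, (wtN n (z i') (c i' : ℕ) *
          (if i' = i then (if (j : ℕ) ≤ (c i' : ℕ) then 1 else 0) else 1)) :=
        Finset.sum_congr rfl fun c _ => hterm c
    _ = ∏ i' : Fin d, ∑ x : Fin (n + 1), (wtN n (z i') (x : ℕ) *
          (if i' = i then (if (j : ℕ) ≤ (x : ℕ) then 1 else 0) else 1)) := by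
        rw [← Fintype.prod_sum (fun i' (x : Fin (n + 1)) => wtN n (z i') (x : ℕ) *
          (if i' = i then (if (j : ℕ) ≤ (x : ℕ) then 1 else 0) else 1))]
    _ = z i j := by
        rw [Finset.prod_eq_single i]
        · simp only [eq_self_iff_true, if_true, mul_ite, mul_one, mul_zero]
          have : ∀ x : Fin (n + 1), (if (j:ℕ) ≤ (x:ℕ) then wtN n (z i) (x:ℕ) else 0)
              = wtN n (z i) (x : ℕ) * (if (j:ℕ) ≤ (x:ℕ) then 1 else 0) := by
            intro x; split_ifs <;> simp
          rw [Finset.sum_congr rfl fun x _ => this x,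
            Fin.sum_univ_eq_sum_range (fun k => wtN n (z i) k * (if (j:ℕ) ≤ k then 1 else 0))
              (n + 1), wtN_tail_sum hz i (j : ℕ) (by omega)]
          congr 1
          exact Fin.ext (toIdx_val (by omega))
        · intro i' _ hne
          simp only [if_neg hne, mul_one]
          exact wtN_fin_sum hz i'
        · intro h; exact absurd (Finset.mem_univ i) h

lemma exists_opt_rep {d n : ℕ} {a : Fin d → Fin (n + 1) → ℝ} {φ : (Fin d → ℝ) → ℝ} {C : ℝ}
    (hC : ∀ y, memDelta d n y → φ (Fmap d n a y) ≤ C)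
    {z} (hz : memDelta d n z) :
    ∃ m : (Fin d → Fin (n + 1)) → ℝ,
      (∀ c, 0 ≤ m c) ∧ (∑ c, m c = 1) ∧
      (∀ x j, ∑ c, m c * vtx d n c x j = z x j) ∧
      (∑ c, m c * φ (Fmap d n a (vtx d n c))
        = concEnv (vertDelta d n) (fun z' => φ (Fmap d n a z')) z) := by
  classical
  set V := (Fin d → Fin (n + 1)) with hV
  set g : (Fin d → Fin (n + 1) → ℝ) → ℝ := fun z' => φ (Fmap d n a z') with hg
  set obj : (V → ℝ) → ℝ := fun m => ∑ c, m c * g (vtx d n c) with hobj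
  set K : Set (V → ℝ) := {m | (∀ c, 0 ≤ m c) ∧ (∑ c, m c = 1) ∧
    (∀ x j, ∑ c, m c * vtx d n c x j = z x j)} with hK
  -- K is nonempty
  have hKne : (stairWt d n z) ∈ K := by
    refine ⟨stairWt_nonneg hz, stairWt_sum_one hz, fun x j => stairWt_combo hz x j⟩
  -- K is compact
  have hsub : K ⊆ Set.Icc (fun _ => (0:ℝ)) (fun _ => (1:ℝ)) := by
    rintro m ⟨h1, h2, -⟩
    constructor
    · intro c; exact h1 c
    · intro c
      calc m c ≤ ∑ c', m c' := Finset.single_le_sum (fun c' _ => h1 c') (Finset.mem_univ c)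
        _ = 1 := h2
  have hclosed : IsClosed K := by
    have e1 : IsClosed {m : V → ℝ | ∀ c, 0 ≤ m c} := by
      have : {m : V → ℝ | ∀ c, 0 ≤ m c} = ⋂ c, {m | 0 ≤ m c} := by
        ext m; simp [Set.mem_iInter]
      rw [this]
      exact isClosed_iInter fun c => isClosed_le continuous_const (continuous_apply c)
    have e2 : IsClosed {m : V → ℝ | ∑ c, m c = 1} :=
      isClosed_eq (continuous_finset_sum _ fun c _ => continuous_apply c) continuous_const
    have e3 : IsClosed {m : V → ℝ | ∀ x j, ∑ c, m c * vtx d n c x j = z x j} := by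
      have : {m : V → ℝ | ∀ x j, ∑ c, m c * vtx d n c x j = z x j}
          = ⋂ x, ⋂ j, {m | ∑ c, m c * vtx d n c x j = z x j} := by
        ext m; simp [Set.mem_iInter] <;> exact Iff.rfl
      rw [this]
      refine isClosed_iInter fun x => isClosed_iInter fun j => isClosed_eq ?_ continuous_const
      exact continuous_finset_sum _ fun c _ => (continuous_apply c).mul continuous_const
    have : K = {m : V → ℝ | ∀ c, 0 ≤ m c} ∩ ({m | ∑ c, m c = 1}
        ∩ {m | ∀ x j, ∑ c, m c * vtx d n c x j = z x j}) := by
      ext m; simp [hK, Set.mem_setOf_eq, and_assoc]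
    rw [this]
    exact e1.inter (e2.inter e3)
  have hcompact : IsCompact K := IsCompact.of_isClosed_subset isCompact_Icc hclosed hsub
  have hcont : Continuous obj :=
    continuous_finset_sum _ fun c _ => (continuous_apply c).mul continuous_const
  obtain ⟨mstar, hmK, hmax⟩ :=
    hcompact.exists_isMaxOn ⟨_, hKne⟩ hcont.continuousOn
  refine ⟨mstar, hmK.1, hmK.2.1, hmK.2.2, ?_⟩
  -- the value of `obj mstar` is the greatest element of the vertex representation set
  have hgreatest : IsGreatest (envSet (vertDelta d n) g z) (obj mstar) := by
    constructor
    · -- membership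
      set N := Fintype.card V with hN
      set e : Fin N ≃ V := (Fintype.equivFin V).symm with he
      refine ⟨N, fun b => mstar (e b), fun b => vtx d n (e b), fun b => hmK.1 _,
        ?_, fun b => vtx_mem_vert d n (e b), ?_, ?_⟩
      · rw [Equiv.sum_comp e mstar]; exact hmK.2.1
      · rw [Equiv.sum_comp e (fun c => mstar c • vtx d n c)]
        funext x j
        rw [Finset.sum_apply, Finset.sum_apply]
        simpa using hmK.2.2 x j
      · rw [Equiv.sum_comp e (fun c => mstar c * g (vtx d n c))]
    · -- upper bound
      rintro r ⟨k, lam, y, hlam, hsum, hy, hcombo, rfl⟩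
      have hyc : ∀ idx, ∃ c, y idx = vtx d n c := fun idx => vert_eq_vtx d n (hy idx)
      choose cc hcc using hyc
      set m' : V → ℝ := fun c => ∑ idx ∈ Finset.univ.filter (fun idx => cc idx = c), lam idx
        with hm'
      have key : ∀ h : V → ℝ, ∑ c, m' c * h c = ∑ idx, lam idx * h (cc idx) := by
        intro h
        rw [← Finset.sum_fiberwise Finset.univ cc (fun idx => lam idx * h (cc idx))]
        refine Finset.sum_congr rfl fun c _ => ?_
        rw [hm', Finset.sum_mul]
        refine Finset.sum_congr rfl fun idx hidx => ?_
        rw [(Finset.mem_filter.1 hidx).2]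
      have hm'K : m' ∈ K := by
        refine ⟨fun c => Finset.sum_nonneg fun idx _ => hlam idx, ?_, ?_⟩
        · have := key (fun _ => 1)
          simpa [hsum] using this
        · intro x j
          have := key (fun c => vtx d n c x j)
          rw [this]
          have : ∀ idx, lam idx * vtx d n (cc idx) x j = lam idx * y idx x j := by
            intro idx; rw [← hcc idx]
          rw [Finset.sum_congr rfl fun idx _ => this idx]
          have happ := congrFun (congrFun hcombo x) j
          rw [← happ, Finset.sum_apply, Finset.sum_apply]
          simp
      have hval : ∑ idx, lam idx * g (y idx) = obj m' := by
        have hobj' : obj m' = ∑ c, m' c * g (vtx d n c) := rfl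
        rw [hobj', key (fun c => g (vtx d n c))]
        refine Finset.sum_congr rfl fun idx _ => ?_
        rw [← hcc idx]
      rw [hval]
      exact hmax hm'K
  rw [concEnv_eq_sSup]
  exact (hgreatest.csSup_eq).symm

lemma memDelta_combo {ι : Type*} [Fintype ι] {d n : ℕ} (w : ι → ℝ) (y : ι → (Fin d → Fin (n + 1) → ℝ))
    (hw : ∀ b, 0 ≤ w b) (hw1 : ∑ b, w b = 1) (hy : ∀ b, memDelta d n (y b)) :
    memDelta d n (∑ b, w b • y b) := by
  have happ : ∀ i j, (∑ b, w b • y b) i j = ∑ b, w b * y b i j := by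
    intro i j; rw [Finset.sum_apply, Finset.sum_apply]; simp
  intro i
  refine ⟨?_, ?_, ?_⟩
  · rw [happ]
    have : ∀ b : ι, w b * y b i 0 = w b := fun b => by rw [(hy b i).1, mul_one]
    rw [Finset.sum_congr rfl fun b _ => this b, hw1]
  · intro j j' hjj'
    rw [happ, happ]
    exact Finset.sum_le_sum fun b _ =>
      mul_le_mul_of_nonneg_left ((hy b i).2.1 hjj') (hw b)
  · rw [happ]
    exact Finset.sum_nonneg fun b _ => mul_nonneg (hw b) (memDelta_nonneg (hy b) i _)

lemma extreme_of_combo {E : Type*} [AddCommGroup E] [Module ℝ E] {s : Set E} {p : E}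
    (hp : p ∈ Set.extremePoints ℝ s) {ι : Type*} [Fintype ι] [DecidableEq ι]
    (lam : ι → ℝ) (q : ι → E)
    (hlam : ∀ b, 0 ≤ lam b) (hsum : ∑ b, lam b = 1) (hq : ∀ b, q b ∈ s)
    (hcomb : ∑ b, lam b • q b = p)
    (hconv : ∀ w : ι → ℝ, (∀ b, 0 ≤ w b) → ∑ b, w b = 1 → ∑ b, w b • q b ∈ s) :
    ∀ b, 0 < lam b → q b = p := by
  intro b0 hb0
  by_contra hne
  set t := lam b0 with ht
  have ht1 : t ≤ 1 := by
    rw [← hsum]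
    exact Finset.single_le_sum (fun b _ => hlam b) (Finset.mem_univ b0)
  rcases eq_or_lt_of_le ht1 with heq | hlt
  · -- t = 1 : all other weights vanish and p = q b0
    have hz : ∀ b, b ≠ b0 → lam b = 0 := by
      intro b hb
      have hrest : ∑ b' ∈ Finset.univ.erase b0, lam b' = 0 := by
        have := Finset.add_sum_erase Finset.univ lam (Finset.mem_univ b0)
        rw [hsum] at this
        linarith [this, heq]
      have := Finset.sum_eq_zero_iff_of_nonneg
        (fun b' _ => hlam b') |>.1 hrest b (Finset.mem_erase.2 ⟨hb, Finset.mem_univ b⟩)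
      exact this
    have : p = q b0 := by
      rw [← hcomb, ← Finset.add_sum_erase Finset.univ (fun b => lam b • q b)
        (Finset.mem_univ b0)]
      rw [Finset.sum_eq_zero fun b hb => by
        rw [hz b (Finset.mem_erase.1 hb).1, zero_smul]]
      rw [add_zero, show lam b0 = (1:ℝ) from ht.symm.trans heq, one_smul]
    exact hne this.symm
  · -- 0 < t < 1
    set w : ι → ℝ := fun b => if b = b0 then 0 else lam b / (1 - t) with hw
    have h1t : 0 < 1 - t := by linarith
    have hw0 : ∀ b, 0 ≤ w b := by
      intro b; rw [hw]; dsimp only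
      split_ifs
      · exact le_refl _
      · exact div_nonneg (hlam b) h1t.le
    have hwd : ∀ b, w b = (if b = b0 then 0 else lam b) / (1 - t) := by
      intro b; rw [hw]; dsimp only; split_ifs
      · rw [zero_div]
      · rfl
    have hsum' : ∑ b, (if b = b0 then 0 else lam b) = 1 - t := by
      have : ∀ b, (if b = b0 then 0 else lam b)
          = lam b - (if b = b0 then lam b else 0) := by
        intro b; split_ifs <;> ring
      rw [Finset.sum_congr rfl fun b _ => this b, Finset.sum_sub_distrib,
        Finset.sum_ite_eq' Finset.univ b0 lam, if_pos (Finset.mem_univ b0), hsum]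
    have hw1 : ∑ b, w b = 1 := by
      rw [Finset.sum_congr rfl fun b _ => hwd b, ← Finset.sum_div, hsum',
        div_self (ne_of_gt h1t)]
    set u : E := ∑ b, w b • q b with hu
    have husmul : (1 - t) • u = ∑ b, (if b = b0 then (0:ℝ) else lam b) • q b := by
      rw [hu, Finset.smul_sum]
      refine Finset.sum_congr rfl fun b _ => ?_
      rw [smul_smul, hwd b]
      congr 1
      split_ifs
      · simp
      · rw [mul_div_cancel₀ _ (ne_of_gt h1t)]
    have hsplit : ∑ b, (if b = b0 then (0:ℝ) else lam b) • q b = p - t • q b0 := by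
      have : ∀ b, (if b = b0 then (0:ℝ) else lam b) • q b
          = lam b • q b - (if b = b0 then lam b • q b else 0) := by
        intro b; split_ifs <;> simp
      rw [Finset.sum_congr rfl fun b _ => this b, Finset.sum_sub_distrib, hcomb,
        Finset.sum_ite_eq' Finset.univ b0 (fun b => lam b • q b), if_pos (Finset.mem_univ b0)]
    have hkey : t • q b0 + (1 - t) • u = p := by
      rw [husmul, hsplit]; abel
    have hmem : p ∈ openSegment ℝ (q b0) u := ⟨t, 1 - t, hb0, h1t, by ring, hkey⟩
    have := (hp.2 (hq b0) (hconv w hw0 hw1) hmem)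
    exact hne this

lemma interp_facts {A B D : ℝ} (hBD : B ≤ D) (hDA : D ≤ A) :
    ∃ s : ℝ, 0 ≤ s ∧ s ≤ 1 ∧ B + s * (A - B) = D := by
  by_cases h : A = B
  · refine ⟨0, le_rfl, zero_le_one, ?_⟩
    subst h
    rw [le_antisymm hDA hBD]
    ring
  · have hAB : B < A := lt_of_le_of_ne (le_trans hBD hDA) (Ne.symm h)
    refine ⟨(D - B) / (A - B), div_nonneg (by linarith) (by linarith), ?_, ?_⟩
    · rw [div_le_one (by linarith)]; linarith
    · rw [div_mul_cancel₀ _ (show A - B ≠ 0 by linarith)]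
      ring

lemma combo_mem_envSet {E : Type*} [AddCommMonoid E] [Module ℝ E] {S : Set E} (g : E → ℝ)
    {ι : Type*} [Fintype ι] (w : ι → ℝ) (y : ι → E)
    (h0 : ∀ b, 0 ≤ w b) (h1 : ∑ b, w b = 1) (hy : ∀ b, y b ∈ S) :
    (∑ b, w b * g (y b)) ∈ envSet S g (∑ b, w b • y b) := by
  set e := (Fintype.equivFin ι).symm with he
  refine ⟨Fintype.card ι, fun idx => w (e idx), fun idx => y (e idx),
    fun idx => h0 _, ?_, fun idx => hy _, ?_, ?_⟩
  · exact Equiv.sum_comp e w ▸ h1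
  · exact Equiv.sum_comp e (fun b => w b • y b)
  · exact (Equiv.sum_comp e (fun b => w b * g (y b))).symm

theorem statement_16
    (d n : ℕ) (hd : 1 ≤ d) (hn : 1 ≤ n)
    (a : Fin d → Fin (n + 1) → ℝ) (ha : ∀ i, StrictMono (a i))
    (l : Fin d → ℕ) (hl : ∀ i, 1 ≤ l i)
    (τ : Fin d → ℕ → ℕ)
    (hτ0 : ∀ i, τ i 0 = 0) (hτl : ∀ i, τ i (l i) = n)
    (hτmono : ∀ i, ∀ t, t < l i → τ i t < τ i (t + 1))
    (φ : (Fin d → ℝ) → ℝ)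
    (hbdd : ∃ C : ℝ, ∀ y ∈ Set.Icc (fun i => a i 0) (fun i => a i (Fin.last n)), φ y ≤ C)
    (hext : ∀ z, memDelta d n z →
      concEnv {z' | memDelta d n z'} (fun z' => φ (Fmap d n a z')) z =
        concEnv (vertDelta d n) (fun z' => φ (Fmap d n a z')) z) :
    ∀ p ∈ Set.extremePoints ℝ
        {q : ((Fin d → ℝ) × ℝ) ×
            (Fin d → Fin (n + 1) → ℝ) × (∀ i : Fin d, Fin (l i - 1) → ℝ) |
          q.1.2 ≤ concEnv {z' | memDelta d n z'} (fun z' => φ (Fmap d n a z')) q.2.1 ∧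
          q.1.1 = Fmap d n a q.2.1 ∧
          Inc1 d n l τ q.2.1 q.2.2 ∧
          ∀ i t, 0 ≤ q.2.2 i t ∧ q.2.2 i t ≤ 1},
      ∀ i t, p.2.2 i t = 0 ∨ p.2.2 i t = 1 := by
  classical
  obtain ⟨C, hC0⟩ := hbdd
  rintro ⟨⟨f, μ⟩, z, δ⟩ hp i t
  show δ i t = 0 ∨ δ i t = 1
  set g : (Fin d → Fin (n + 1) → ℝ) → ℝ := fun z' => φ (Fmap d n a z') with hgdef
  have hpR := hp.1
  have hpext := hp.2
  obtain ⟨hμ, hf, hinc, hδ01⟩ := hpR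
  dsimp only at hμ hf hinc hδ01
  have hz := hinc.1
  have hC : ∀ y, memDelta d n y → g y ≤ C := fun y hy => hC0 _ (Fmap_mem_Icc ha hy)
  have hC' : ∀ y ∈ {z' | memDelta d n z'}, g y ≤ C := fun y hy => hC y hy
  obtain ⟨m, hm0, hm1, hmz, hmval⟩ := exists_opt_rep hC hz
  set gval := concEnv {z' | memDelta d n z'} g z with hgval
  have hgv : ∑ c, m c * g (vtx d n c) = gval := by rw [hmval, hgval, hext z hz]
  -- index bounds
  have hτlt : ∀ (i' : Fin d) (t' : Fin (l i' - 1)), τ i' ((t' : ℕ) + 1) < n := by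
    intro i' t'
    have hchain : ∀ u, u ≤ l i' → ∀ s, s < u → τ i' s < τ i' u := by
      intro u
      induction u with
      | zero => intro _ s hs; omega
      | succ v ih =>
        intro hu s hs
        have hv := hτmono i' v (by omega)
        rcases Nat.lt_succ_iff_lt_or_eq.1 hs with h | h
        · exact lt_trans (ih (by omega) s h) hv
        · exact h ▸ hv
    have h1 : (t' : ℕ) + 1 < l i' := by have := t'.isLt; omega
    have h2 := hchain (l i') le_rfl ((t' : ℕ) + 1) h1
    rwa [hτl i'] at h2
  have hJle : ∀ (i' : Fin d) (t' : Fin (l i' - 1)),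
      toIdx n (τ i' ((t' : ℕ) + 1)) ≤ toIdx n (τ i' ((t' : ℕ) + 1) + 1) := by
    intro i' t'
    rw [Fin.le_def, toIdx_val (le_of_lt (hτlt i' t')), toIdx_val (hτlt i' t')]
    omega
  -- interpolation coefficients
  have hSex : ∀ (i' : Fin d) (t' : Fin (l i' - 1)), ∃ s : ℝ, 0 ≤ s ∧ s ≤ 1 ∧
      z i' (toIdx n (τ i' ((t' : ℕ) + 1) + 1)) + s * (z i' (toIdx n (τ i' ((t' : ℕ) + 1)))
        - z i' (toIdx n (τ i' ((t' : ℕ) + 1) + 1))) = δ i' t' :=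
    fun i' t' => interp_facts (hinc.2 i' t').2 (hinc.2 i' t').1
  choose sf hsf0 hsf1 hsfD using hSex
  set dval : (Fin d → Fin (n + 1)) → ∀ i' : Fin d, Fin (l i' - 1) → ℝ :=
    fun c i' t' => vtx d n c i' (toIdx n (τ i' ((t' : ℕ) + 1) + 1)) + sf i' t' *
      (vtx d n c i' (toIdx n (τ i' ((t' : ℕ) + 1)))
        - vtx d n c i' (toIdx n (τ i' ((t' : ℕ) + 1) + 1))) with hdval
  set Q : (Fin d → Fin (n + 1)) → ((Fin d → ℝ) × ℝ) ×
      ((Fin d → Fin (n + 1) → ℝ) × (∀ i' : Fin d, Fin (l i' - 1) → ℝ)) :=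
    fun c => ((Fmap d n a (vtx d n c), g (vtx d n c) + (μ - gval)), (vtx d n c, dval c))
    with hQ
  have hμgval : μ - gval ≤ 0 := sub_nonpos.2 hμ
  have hdval_mem : ∀ c (i' : Fin d) (t' : Fin (l i' - 1)),
      vtx d n c i' (toIdx n (τ i' ((t' : ℕ) + 1) + 1)) ≤ dval c i' t'
      ∧ dval c i' t' ≤ vtx d n c i' (toIdx n (τ i' ((t' : ℕ) + 1))) := by
    intro c i' t'
    have hle : vtx d n c i' (toIdx n (τ i' ((t' : ℕ) + 1) + 1))
        ≤ vtx d n c i' (toIdx n (τ i' ((t' : ℕ) + 1))) :=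
      (vtx_memDelta d n c i').2.1 (hJle i' t')
    have h0 := hsf0 i' t'
    have h1 := hsf1 i' t'
    constructor
    · simp only [hdval]; nlinarith
    · simp only [hdval]; nlinarith
  -- projections of convex combinations of the Q c
  have hWproj : ∀ w : (Fin d → Fin (n + 1)) → ℝ,
      (∑ c, w c • Q c) = ((∑ c, w c • Fmap d n a (vtx d n c),
        ∑ c, w c * (g (vtx d n c) + (μ - gval))),
        (∑ c, w c • vtx d n c, ∑ c, w c • dval c)) := by
    intro w
    refine Prod.ext (Prod.ext ?_ ?_) (Prod.ext ?_ ?_) <;>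
      simp [hQ, Prod.fst_sum, Prod.snd_sum, Prod.smul_fst, Prod.smul_snd, smul_eq_mul]
  have happδ : ∀ (w : (Fin d → Fin (n + 1)) → ℝ) (i' : Fin d) (t' : Fin (l i' - 1)),
      (∑ c, w c • dval c) i' t' = ∑ c, w c * dval c i' t' := by
    intro w i' t'
    rw [Finset.sum_apply, Finset.sum_apply]
    simp
  have happz : ∀ (w : (Fin d → Fin (n + 1)) → ℝ) (i' : Fin d) (j : Fin (n + 1)),
      (∑ c, w c • vtx d n c) i' j = ∑ c, w c * vtx d n c i' j := by
    intro w i' j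
    rw [Finset.sum_apply, Finset.sum_apply]
    simp
  have hsum_expand : ∀ w : (Fin d → Fin (n + 1)) → ℝ, ∑ c, w c = 1 →
      ∑ c, w c * (g (vtx d n c) + (μ - gval)) = (∑ c, w c * g (vtx d n c)) + (μ - gval) := by
    intro w hw1
    have : ∀ c, w c * (g (vtx d n c) + (μ - gval))
        = w c * g (vtx d n c) + w c * (μ - gval) := fun c => by ring
    rw [Finset.sum_congr rfl fun c _ => this c, Finset.sum_add_distrib, ← Finset.sum_mul, hw1,
      one_mul]
  -- any convex combination of the Q c lies in the relaxation
  have claim_mem : ∀ w : (Fin d → Fin (n + 1)) → ℝ, (∀ c, 0 ≤ w c) → ∑ c, w c = 1 →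
      (∑ c, w c • Q c) ∈ {q : ((Fin d → ℝ) × ℝ) ×
          (Fin d → Fin (n + 1) → ℝ) × (∀ i : Fin d, Fin (l i - 1) → ℝ) |
        q.1.2 ≤ concEnv {z' | memDelta d n z'} (fun z' => φ (Fmap d n a z')) q.2.1 ∧
        q.1.1 = Fmap d n a q.2.1 ∧
        Inc1 d n l τ q.2.1 q.2.2 ∧
        ∀ i t, 0 ≤ q.2.2 i t ∧ q.2.2 i t ≤ 1} := by
    intro w hw0 hw1
    rw [hWproj w]
    refine ⟨?_, ?_, ⟨?_, ?_⟩, ?_⟩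
    · -- envelope bound
      show ∑ c, w c * (g (vtx d n c) + (μ - gval)) ≤ _
      have hle : ∑ c, w c * (g (vtx d n c) + (μ - gval)) ≤ ∑ c, w c * g (vtx d n c) := by
        rw [hsum_expand w hw1]; linarith
      refine le_trans hle (le_concEnv hC' ?_)
      exact combo_mem_envSet g w (fun c => vtx d n c) hw0 hw1 (fun c => vtx_memDelta d n c)
    · -- linear map
      exact (Fmap_sum d n a w (fun c => vtx d n c)).symm
    · -- memDelta
      exact memDelta_combo w (fun c => vtx d n c) hw0 hw1 (fun c => vtx_memDelta d n c)
    · -- sandwich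
      intro i' t'
      constructor
      · dsimp only
        rw [happδ w i' t', happz w i' _]
        exact Finset.sum_le_sum fun c _ =>
          mul_le_mul_of_nonneg_left (hdval_mem c i' t').2 (hw0 c)
      · dsimp only
        rw [happδ w i' t', happz w i' _]
        exact Finset.sum_le_sum fun c _ =>
          mul_le_mul_of_nonneg_left (hdval_mem c i' t').1 (hw0 c)
    · -- [0,1] bounds
      intro i' t'
      constructor
      · dsimp only
        rw [happδ (fun c => w c) i' t']
        refine Finset.sum_nonneg fun c _ => mul_nonneg (hw0 c) ?_
        exact le_trans (vtx_nonneg d n c i' _) (hdval_mem c i' t').1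
      · dsimp only
        rw [happδ (fun c => w c) i' t']
        calc ∑ c, w c * dval c i' t' ≤ ∑ c, w c * 1 := by
              refine Finset.sum_le_sum fun c _ => mul_le_mul_of_nonneg_left ?_ (hw0 c)
              exact le_trans (hdval_mem c i' t').2 (vtx_le_one d n c i' _)
          _ = 1 := by rw [← Finset.sum_mul, hw1, one_mul]
  -- the point is the corresponding combination of the Q c
  have hzfun : ∑ c, m c • vtx d n c = z := by
    funext x j
    rw [happz m x j]
    exact hmz x j
  have hcomb : ∑ c, m c • Q c = ((f, μ), (z, δ)) := by
    rw [hWproj m]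
    refine Prod.ext (Prod.ext ?_ ?_) (Prod.ext ?_ ?_)
    · show ∑ c, m c • Fmap d n a (vtx d n c) = f
      rw [hf, ← hzfun]
      exact (Fmap_sum d n a m (fun c => vtx d n c)).symm
    · show ∑ c, m c * (g (vtx d n c) + (μ - gval)) = μ
      rw [hsum_expand m hm1, hgv]; ring
    · exact hzfun
    · show ∑ c, m c • dval c = δ
      funext i' t'
      rw [happδ m i' t']
      have expand : ∀ c, m c * dval c i' t'
          = m c * vtx d n c i' (toIdx n (τ i' ((t' : ℕ) + 1) + 1))
            + sf i' t' * (m c * vtx d n c i' (toIdx n (τ i' ((t' : ℕ) + 1))))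
            - sf i' t' * (m c * vtx d n c i' (toIdx n (τ i' ((t' : ℕ) + 1) + 1))) := by
        intro c; simp only [hdval]; ring
      rw [Finset.sum_congr rfl fun c _ => expand c, Finset.sum_sub_distrib,
        Finset.sum_add_distrib, ← Finset.mul_sum, ← Finset.mul_sum, hmz i' _, hmz i' _]
      linear_combination hsfD i' t'
  have hQmem : ∀ c, Q c ∈ {q : ((Fin d → ℝ) × ℝ) ×
      (Fin d → Fin (n + 1) → ℝ) × (∀ i : Fin d, Fin (l i - 1) → ℝ) |
      q.1.2 ≤ concEnv {z' | memDelta d n z'} (fun z' => φ (Fmap d n a z')) q.2.1 ∧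
      q.1.1 = Fmap d n a q.2.1 ∧
      Inc1 d n l τ q.2.1 q.2.2 ∧
      ∀ i t, 0 ≤ q.2.2 i t ∧ q.2.2 i t ≤ 1} := by
    intro c
    have hterm : ∀ c', (if c' = c then (1:ℝ) else 0) • Q c'
        = (if c' = c then Q c' else 0) := fun c' => by split_ifs <;> simp
    have hrep : Q c = ∑ c', (if c' = c then (1:ℝ) else 0) • Q c' := by
      rw [Finset.sum_congr rfl fun c' _ => hterm c',
        Finset.sum_ite_eq' Finset.univ c Q, if_pos (Finset.mem_univ c)]
    rw [hrep]
    refine claim_mem _ (fun c' => by split_ifs <;> norm_num) ?_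
    rw [Finset.sum_ite_eq' Finset.univ c (fun _ => (1:ℝ)), if_pos (Finset.mem_univ c)]
  have hkey := extreme_of_combo hp m Q hm0 hm1 hQmem hcomb claim_mem
  have hc0 : ∃ c0, 0 < m c0 := by
    by_contra h
    push_neg at h
    have : ∑ c, m c = 0 := Finset.sum_eq_zero fun c _ => le_antisymm (h c) (hm0 c)
    rw [hm1] at this
    norm_num at this
  obtain ⟨c0, hc0pos⟩ := hc0
  have hQc0 := hkey c0 hc0pos
  have hzv : vtx d n c0 = z := congrArg (fun q => q.2.1) hQc0
  -- entries of z at the two relevant indices are 0 or 1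
  have h01 : ∀ j, z i j = 0 ∨ z i j = 1 := by
    intro j
    rw [← hzv]
    unfold vtx
    split_ifs
    · right; rfl
    · left; rfl
  by_cases hAB : z i (toIdx n (τ i ((t : ℕ) + 1))) = z i (toIdx n (τ i ((t : ℕ) + 1) + 1))
  · -- pinched case
    have h1 := (hinc.2 i t).1
    have h2 := (hinc.2 i t).2
    have hδeq : δ i t = z i (toIdx n (τ i ((t : ℕ) + 1))) :=
      le_antisymm h1 (hAB.trans_le h2)
    rcases h01 (toIdx n (τ i ((t : ℕ) + 1))) with h | h
    · left; rw [hδeq, h]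
    · right; rw [hδeq, h]
  · -- free case: perturb
    have hBA : z i (toIdx n (τ i ((t : ℕ) + 1) + 1)) ≤ z i (toIdx n (τ i ((t : ℕ) + 1))) :=
      (hz i).2.1 (hJle i t)
    have hA1 : z i (toIdx n (τ i ((t : ℕ) + 1))) = 1 := by
      rcases h01 (toIdx n (τ i ((t : ℕ) + 1))) with h | h
      · exfalso
        rcases h01 (toIdx n (τ i ((t : ℕ) + 1) + 1)) with h' | h'
        · exact hAB (h.trans h'.symm)
        · rw [h, h'] at hBA; linarith
      · exact h
    have hB0 : z i (toIdx n (τ i ((t : ℕ) + 1) + 1)) = 0 := by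
      rcases h01 (toIdx n (τ i ((t : ℕ) + 1) + 1)) with h | h
      · exact h
      · exfalso
        rcases h01 (toIdx n (τ i ((t : ℕ) + 1))) with h' | h'
        · rw [h, h'] at hBA; linarith
        · exact hAB (h'.trans h.symm)
    by_contra hcon
    push_neg at hcon
    have h0δ : 0 < δ i t := lt_of_le_of_ne (hδ01 i t).1 (Ne.symm hcon.1)
    have hδ1 : δ i t < 1 := lt_of_le_of_ne (hδ01 i t).2 hcon.2
    set ε := min (δ i t) (1 - δ i t) with hε
    have hεpos : 0 < ε := lt_min h0δ (by linarith)
    have hεδ : ε ≤ δ i t := min_le_left _ _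
    have hεδ1 : ε ≤ 1 - δ i t := min_le_right _ _
    set dper : ℝ → ∀ i' : Fin d, Fin (l i' - 1) → ℝ :=
      fun s i' t' => if i' = i ∧ (t' : ℕ) = (t : ℕ) then δ i' t' + s else δ i' t' with hdper
    have hmem : ∀ s : ℝ, -ε ≤ s → s ≤ ε → (((f, μ), (z, dper s)) ∈
        {q : ((Fin d → ℝ) × ℝ) ×
            (Fin d → Fin (n + 1) → ℝ) × (∀ i : Fin d, Fin (l i - 1) → ℝ) |
          q.1.2 ≤ concEnv {z' | memDelta d n z'} (fun z' => φ (Fmap d n a z')) q.2.1 ∧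
          q.1.1 = Fmap d n a q.2.1 ∧
          Inc1 d n l τ q.2.1 q.2.2 ∧
          ∀ i t, 0 ≤ q.2.2 i t ∧ q.2.2 i t ≤ 1}) := by
      intro s hs1 hs2
      refine ⟨hμ, hf, ⟨hz, ?_⟩, ?_⟩
      · intro i' t'
        dsimp only
        by_cases hcnd : i' = i ∧ (t' : ℕ) = (t : ℕ)
        · obtain ⟨he1, he2⟩ := hcnd
          subst he1
          have ht' : t' = t := Fin.ext he2
          subst ht'
          have hv : dper s i' t' = δ i' t' + s := by simp [hdper]
          rw [hv, hA1, hB0]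
          constructor <;> linarith
        · have hv : dper s i' t' = δ i' t' := by simp only [hdper]; rw [if_neg hcnd]
          rw [hv]
          exact hinc.2 i' t'
      · intro i' t'
        dsimp only
        by_cases hcnd : i' = i ∧ (t' : ℕ) = (t : ℕ)
        · obtain ⟨he1, he2⟩ := hcnd
          subst he1
          have ht' : t' = t := Fin.ext he2
          subst ht'
          have hv : dper s i' t' = δ i' t' + s := by simp [hdper]
          rw [hv]
          constructor <;> linarith
        · have hv : dper s i' t' = δ i' t' := by simp only [hdper]; rw [if_neg hcnd]
          rw [hv]
          exact hδ01 i' t'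
    have hqm := hmem (-ε) le_rfl (by linarith)
    have hqp := hmem ε (by linarith) le_rfl
    have hmid : ((f, μ), (z, δ)) ∈ openSegment ℝ (((f, μ), (z, dper (-ε))))
        (((f, μ), (z, dper ε))) := by
      refine ⟨1/2, 1/2, by norm_num, by norm_num, by norm_num, ?_⟩
      simp only [Prod.smul_mk, Prod.mk_add_mk, Prod.mk.injEq]
      refine ⟨⟨?_, ?_⟩, ?_, ?_⟩
      · rw [← add_smul]; norm_num
      · simp only [smul_eq_mul]; ring
      · rw [← add_smul]; norm_num
      · funext i' t'
        simp only [Pi.add_apply, Pi.smul_apply, smul_eq_mul, hdper]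
        split_ifs <;> ring
    have hfin := (hpext hqm hqp hmid)
    have hdd : dper (-ε) = δ := congrArg (fun q => q.2.2) hfin
    have hval : dper (-ε) i t = δ i t := by rw [hdd]
    have hvv : dper (-ε) i t = δ i t + (-ε) := by simp [hdper]
    rw [hvv] at hval
    linarith
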